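/- Let (G,M,I) be a finite context with ∅'' = ∅, let H ⊆ G be nonempty, and let T be a classification tree in the box extent lattice B(G,M,I). Then T_H = {E ∩ H : E ∈ T} ∖ {∅} is a classification tree in the box extent lattice B(H, M, I ∩ (H×M)) of the subcontext. -/
import Mathlib


open Set

variable {G M : Type*}

/-- The attribute-derivation `A'` of a set of objects (the restricted relation of a
subcontext agrees with `I` on its object set, so no restriction is needed here). -/
def polarUp (I : G → M → Prop) (A : Set G) : Set M := {m | ∀ g ∈ A, I g m}

/-- The object-derivation `B'` of a set of attributes, computed in the subcontext whose
object set is `H` (relation `I ∩ H×M`). -/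
def polarDown (I : G → M → Prop) (H : Set G) (B : Set M) : Set G :=
  {g | g ∈ H ∧ ∀ m ∈ B, I g m}

/-- The closure `A''` computed in the subcontext with object set `H`.
Taking `H = Set.univ` gives the closure in the full context `(G,M,I)`. -/
def cl2 (I : G → M → Prop) (H A : Set G) : Set G := polarDown I H (polarUp I A)

/-- `A` is an extent of the subcontext with object set `H`. -/
def IsExtent (I : G → M → Prop) (H A : Set G) : Prop := A ⊆ H ∧ cl2 I H A = A

/-- An extent partition of the subcontext with object set `H`: a partition of `H`
all of whose classes are extents. -/
def IsExtentPartition (I : G → M → Prop) (H : Set G) (π : Set (Set G)) : Prop :=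
  (∀ A ∈ π, A.Nonempty) ∧ π.Pairwise Disjoint ∧ ⋃₀ π = H ∧ ∀ A ∈ π, IsExtent I H A

/-- `E` is a box extent of the subcontext with object set `H`: a class of some extent
partition, or `∅''`. -/
def IsBoxExtent (I : G → M → Prop) (H E : Set G) : Prop :=
  (∃ π : Set (Set G), IsExtentPartition I H π ∧ E ∈ π) ∨ E = cl2 I H ∅

/-- The finest extent partition: every class of every extent partition is a union of
its classes. -/
def IsFinestExtentPartition (I : G → M → Prop) (H : Set G) (π : Set (Set G)) : Prop :=
  IsExtentPartition I H π ∧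
    ∀ σ : Set (Set G), IsExtentPartition I H σ → ∀ A ∈ σ, ∃ S ⊆ π, A = ⋃₀ S

/-- A classification tree in the box extent lattice of the subcontext with object set
`H`: a set of nonempty box extents such that for every nonempty box extent `X`,
`{E ∈ T | X ⊆ E}` is a nonempty chain under inclusion. -/
def IsBoxClassTree (I : G → M → Prop) (H : Set G) (T : Set (Set G)) : Prop :=
  (∀ E ∈ T, E.Nonempty ∧ IsBoxExtent I H E) ∧
  ∀ X : Set G, X.Nonempty → IsBoxExtent I H X →
    ({E ∈ T | X ⊆ E}.Nonempty ∧ IsChain (· ⊆ ·) {E ∈ T | X ⊆ E})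

/-- A maximal classification tree in the box extent lattice. -/
def IsMaxBoxClassTree (I : G → M → Prop) (H : Set G) (T : Set (Set G)) : Prop :=
  IsBoxClassTree I H T ∧ ∀ T' : Set (Set G), IsBoxClassTree I H T' → T ⊆ T' → T' = T

section Aux

variable {I : G → M → Prop} {H A B : Set G}

lemma polarUp_anti (h : A ⊆ B) : polarUp I B ⊆ polarUp I A :=
  fun m hm g hg => hm g (h hg)

lemma polarDown_anti {B1 B2 : Set M} (h : B1 ⊆ B2) :
    polarDown I H B2 ⊆ polarDown I H B1 :=
  fun g hg => ⟨hg.1, fun m hm => hg.2 m (h hm)⟩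

lemma cl2_mono (h : A ⊆ B) : cl2 I H A ⊆ cl2 I H B :=
  polarDown_anti (polarUp_anti h)

lemma subset_cl2 (h : A ⊆ H) : A ⊆ cl2 I H A :=
  fun g hg => ⟨h hg, fun m hm => hm g hg⟩

lemma cl2_subset : cl2 I H A ⊆ H := fun _ hg => hg.1

lemma cl2_restrict : cl2 I H A = cl2 I Set.univ A ∩ H := by
  ext g
  simp only [cl2, polarDown, mem_setOf_eq, mem_inter_iff, mem_univ, true_and]
  tauto

lemma extent_inter (hA : IsExtent I Set.univ A) (hB : IsExtent I Set.univ B) :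
    IsExtent I Set.univ (A ∩ B) := by
  refine ⟨subset_univ _, subset_antisymm ?_ (subset_cl2 (subset_univ _))⟩
  exact subset_inter ((cl2_mono inter_subset_left).trans hA.2.le)
    ((cl2_mono inter_subset_right).trans hB.2.le)

/-- The common refinement of two extent partitions of the full context. -/
lemma refine_partition {π1 π2 : Set (Set G)} (h1 : IsExtentPartition I Set.univ π1)
    (h2 : IsExtentPartition I Set.univ π2) :
    IsExtentPartition I Set.univ
      {C | C.Nonempty ∧ ∃ A ∈ π1, ∃ B ∈ π2, C = A ∩ B} := by
  obtain ⟨h1ne, h1dis, h1un, h1ext⟩ := h1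
  obtain ⟨h2ne, h2dis, h2un, h2ext⟩ := h2
  refine ⟨fun C hC => hC.1, ?_, ?_, ?_⟩
  · rintro C1 ⟨-, A1, hA1, B1, hB1, rfl⟩ C2 ⟨-, A2, hA2, B2, hB2, rfl⟩ hne
    by_cases hA : A1 = A2
    · have hB : B1 ≠ B2 := by
        rintro rfl; exact hne (by rw [hA])
      exact Set.disjoint_left.2 fun g hg1 hg2 =>
        Set.disjoint_left.1 (h2dis hB1 hB2 hB) hg1.2 hg2.2
    · exact Set.disjoint_left.2 fun g hg1 hg2 =>
        Set.disjoint_left.1 (h1dis hA1 hA2 hA) hg1.1 hg2.1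
  · apply subset_antisymm (subset_univ _)
    intro g _
    have hg1 : g ∈ ⋃₀ π1 := by rw [h1un]; trivial
    have hg2 : g ∈ ⋃₀ π2 := by rw [h2un]; trivial
    obtain ⟨A, hA, hgA⟩ := hg1
    obtain ⟨B, hB, hgB⟩ := hg2
    exact ⟨A ∩ B, ⟨⟨g, hgA, hgB⟩, A, hA, B, hB, rfl⟩, hgA, hgB⟩
  · rintro C ⟨-, A, hA, B, hB, rfl⟩
    exact extent_inter (h1ext A hA) (h2ext B hB)

lemma boxExtent_inter {E1 E2 : Set G}
    (hempty : cl2 I Set.univ (∅ : Set G) = ∅)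
    (h1 : IsBoxExtent I Set.univ E1) (h2 : IsBoxExtent I Set.univ E2)
    (hne : (E1 ∩ E2).Nonempty) :
    IsBoxExtent I Set.univ (E1 ∩ E2) := by
  rcases h1 with ⟨π1, hπ1, hE1⟩ | h1
  · rcases h2 with ⟨π2, hπ2, hE2⟩ | h2
    · exact Or.inl ⟨_, refine_partition hπ1 hπ2, hne, E1, hE1, E2, hE2, rfl⟩
    · rw [h2, hempty] at hne; simp at hne
  · rw [h1, hempty] at hne; simp at hne

/-- Restriction of an extent partition of the full context to `H`. -/
lemma restrict_partition {π : Set (Set G)} (hπ : IsExtentPartition I Set.univ π) :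
    IsExtentPartition I H (((fun E => E ∩ H) '' π) \ {∅}) := by
  obtain ⟨hne, hdis, hun, hext⟩ := hπ
  refine ⟨?_, ?_, ?_, ?_⟩
  · rintro A ⟨⟨E, hE, rfl⟩, hA⟩
    exact nonempty_iff_ne_empty.2 (by simpa using hA)
  · rintro A1 ⟨⟨E1, hE1, rfl⟩, -⟩ A2 ⟨⟨E2, hE2, rfl⟩, -⟩ hA
    have hE : E1 ≠ E2 := by rintro rfl; exact hA rfl
    exact Set.disjoint_left.2 fun g hg1 hg2 =>
      Set.disjoint_left.1 (hdis hE1 hE2 hE) hg1.1 hg2.1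
  · apply subset_antisymm
    · rintro g ⟨A, ⟨⟨E, hE, rfl⟩, -⟩, hg⟩
      exact hg.2
    · intro g hg
      have : g ∈ ⋃₀ π := by rw [hun]; trivial
      obtain ⟨E, hE, hgE⟩ := this
      have hne2 : (E ∩ H).Nonempty := ⟨g, hgE, hg⟩
      exact ⟨E ∩ H, ⟨⟨E, hE, rfl⟩, by simpa using hne2.ne_empty⟩, hgE, hg⟩
  · rintro A ⟨⟨E, hE, rfl⟩, -⟩
    refine ⟨inter_subset_right, subset_antisymm ?_ (subset_cl2 inter_subset_right)⟩
    rw [cl2_restrict]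
    exact inter_subset_inter_left _ ((cl2_mono inter_subset_left).trans (hext E hE).2.le)

/-- A nonempty box extent of the full context restricts to a box extent of the
subcontext. -/
lemma boxExtent_restrict {E : Set G}
    (hempty : cl2 I Set.univ (∅ : Set G) = ∅)
    (hE : IsBoxExtent I Set.univ E) (hne : (E ∩ H).Nonempty) :
    IsBoxExtent I H (E ∩ H) := by
  rcases hE with ⟨π, hπ, hEπ⟩ | hE
  · exact Or.inl ⟨_, restrict_partition hπ,
      ⟨E, hEπ, rfl⟩, by simpa using hne.ne_empty⟩
  · rw [hE, hempty] at hne; simp at hne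

lemma boxExtent_subset {X : Set G} (hX : IsBoxExtent I H X) : X ⊆ H := by
  rcases hX with ⟨π, hπ, hXπ⟩ | hX
  · exact (hπ.2.2.2 X hXπ).1
  · rw [hX]; exact cl2_subset

end Aux

/-- Restricting a classification tree of the box extent lattice `B(G,M,I)` to a nonempty
subset `H ⊆ G` (and discarding the empty set) yields a classification tree of the box
extent lattice of the subcontext `(H, M, I ∩ H×M)`. -/
theorem boxClassTree_restrict
    [Fintype G] [Fintype M] (I : G → M → Prop)
    (hempty : cl2 I Set.univ (∅ : Set G) = ∅)
    (H : Set G) (hH : H.Nonempty)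
    (T : Set (Set G)) (hT : IsBoxClassTree I Set.univ T) :
    IsBoxClassTree I H (((fun E => E ∩ H) '' T) \ {∅}) := by
  obtain ⟨g0, hg0⟩ := hH
  -- `univ` is a box extent of the full context
  have huniv_box : IsBoxExtent I Set.univ (Set.univ : Set G) := by
    refine Or.inl ⟨{Set.univ}, ⟨?_, ?_, ?_, ?_⟩, rfl⟩
    · rintro A rfl; exact ⟨g0, trivial⟩
    · exact Set.pairwise_singleton _ _
    · simp
    · rintro A rfl
      exact ⟨subset_univ _, subset_antisymm cl2_subset (subset_cl2 (subset_univ _))⟩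
  -- hence `univ ∈ T`
  have huniv_T : (Set.univ : Set G) ∈ T := by
    obtain ⟨⟨E, hET, hsub⟩, -⟩ := hT.2 Set.univ ⟨g0, trivial⟩ huniv_box
    rwa [← subset_antisymm (subset_univ E) hsub]
  constructor
  · rintro F ⟨⟨E, hET, rfl⟩, hFne⟩
    have hne : (E ∩ H).Nonempty := nonempty_iff_ne_empty.2 (by simpa using hFne)
    exact ⟨hne, boxExtent_restrict hempty (hT.1 E hET).2 hne⟩
  · intro X hXne hXbox
    have hXH : X ⊆ H := boxExtent_subset hXbox
    constructor
    · refine ⟨H, ⟨⟨Set.univ, huniv_T, by simp⟩, ?_⟩, hXH⟩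
      have hHne : H.Nonempty := ⟨g0, hg0⟩
      simpa using hHne.ne_empty
    · rintro F1 ⟨⟨⟨E1, hE1T, rfl⟩, -⟩, hXF1⟩ F2 ⟨⟨⟨E2, hE2T, rfl⟩, -⟩, hXF2⟩ hF
      have hE : E1 ≠ E2 := by rintro rfl; exact hF rfl
      have hZne : (E1 ∩ E2).Nonempty :=
        hXne.mono (subset_inter (hXF1.trans inter_subset_left)
          (hXF2.trans inter_subset_left))
      have hZbox : IsBoxExtent I Set.univ (E1 ∩ E2) :=
        boxExtent_inter hempty (hT.1 E1 hE1T).2 (hT.1 E2 hE2T).2 hZne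
      have hchain := (hT.2 (E1 ∩ E2) hZne hZbox).2
      rcases hchain ⟨hE1T, inter_subset_left⟩ ⟨hE2T, inter_subset_right⟩ hE with h | h
      · exact Or.inl (inter_subset_inter_left _ h)
      · exact Or.inr (inter_subset_inter_left _ h)
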